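/- arXiv:0906.4142 — 2 statements merged into one kernel-verified Lean document; each statement's English description precedes it below -/
import Mathlib

section
/- Let G be a simple graph on n vertices such that every nonempty subgraph of G has a vertex of degree at most D. Then the number of cliques of G is at most 1 + n * 2^D. -/
open Classical in
noncomputable def cliqueCount {V : Type*} [Fintype V] (G : SimpleGraph V) : ℕ :=
  (Finset.univ.filter fun s : Finset V => G.IsClique (s : Set V)).card

open Classical in
/-- If every nonempty (induced) subgraph of a simple graph `G` on `n` vertices has a
vertex of degree at most `D` (i.e. `G` is `D`-degenerate), then `G` has at most
`1 + n * 2 ^ D` cliques. -/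
theorem cliqueCount_le_of_degenerate {V : Type*} [Fintype V] (G : SimpleGraph V)
    (n D : ℕ) (hn : Fintype.card V = n)
    (hdeg : ∀ s : Finset V, s.Nonempty → ∃ v ∈ s, (s.filter fun u => G.Adj v u).card ≤ D) :
    cliqueCount G ≤ 1 + n * 2 ^ D := by
  classical
  subst hn
  suffices h : ∀ t : Finset V,
      ((t.powerset).filter fun s : Finset V => G.IsClique (s : Set V)).card ≤ 1 + t.card * 2 ^ D by
    have := h Finset.univ
    simpa [cliqueCount, Finset.powerset_univ, Finset.card_univ] using this
  intro t
  induction t using Finset.strongInductionOn with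
  | _ t ih =>
    rcases t.eq_empty_or_nonempty with rfl | ht
    · simp [Finset.filter_singleton]
    · obtain ⟨v, hv, hvd⟩ := hdeg t ht
      set X := (t.powerset).filter fun s : Finset V => G.IsClique (s : Set V) with hX
      have hsplit : X.card = (X.filter fun s => v ∈ s).card + (X.filter fun s => v ∉ s).card :=
        (Finset.card_filter_add_card_filter_not _).symm
      have h1 : (X.filter fun s => v ∉ s) =
          ((t.erase v).powerset).filter fun s : Finset V => G.IsClique (s : Set V) := by
        ext s
        simp only [hX, Finset.mem_filter, Finset.mem_powerset, Finset.subset_erase]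
        tauto
      have h2 : (X.filter fun s => v ∈ s).card ≤ 2 ^ D := by
        have hinj : ∀ s ∈ X.filter fun s => v ∈ s,
            s.erase v ∈ (t.filter fun u => G.Adj v u).powerset := by
          intro s hs
          simp only [hX, Finset.mem_filter, Finset.mem_powerset] at hs ⊢
          obtain ⟨⟨hst, hcl⟩, hvs⟩ := hs
          intro u hu
          rw [Finset.mem_erase] at hu
          refine Finset.mem_filter.2 ⟨hst hu.2, ?_⟩
          exact hcl (by exact_mod_cast hvs) (by exact_mod_cast hu.2) (Ne.symm hu.1)
        calc (X.filter fun s => v ∈ s).card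
            ≤ ((t.filter fun u => G.Adj v u).powerset).card := by
              apply Finset.card_le_card_of_injOn (fun s => s.erase v) (fun s hs => hinj s (Finset.mem_coe.1 hs))
              intro a ha b hb hab
              simp only [Finset.coe_filter, Set.mem_setOf_eq, hX, Finset.mem_filter] at ha hb
              have := Finset.insert_erase ha.2
              rw [← Finset.insert_erase ha.2, ← Finset.insert_erase hb.2]
              simp only at hab
              rw [hab]
          _ = 2 ^ (t.filter fun u => G.Adj v u).card := Finset.card_powerset _
          _ ≤ 2 ^ D := Nat.pow_le_pow_right (by norm_num) hvd
      have h3 : (X.filter fun s => v ∉ s).card ≤ 1 + (t.erase v).card * 2 ^ D := by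
        rw [h1]; exact ih _ (Finset.erase_ssubset hv)
      have hcard : (t.erase v).card = t.card - 1 := Finset.card_erase_of_mem hv
      have hpos : 1 ≤ t.card := Finset.card_pos.2 ht
      calc X.card = (X.filter fun s => v ∈ s).card + (X.filter fun s => v ∉ s).card := hsplit
        _ ≤ 2 ^ D + (1 + (t.card - 1) * 2 ^ D) := by rw [← hcard]; exact Nat.add_le_add h2 h3
        _ = 1 + (t.card - 1 + 1) * 2 ^ D := by ring
        _ = 1 + t.card * 2 ^ D := by rw [Nat.sub_add_cancel hpos]
end

section
/- Let G be a simple graph on n vertices and suppose there is an ordering v_1, …, v_n of V(G) such that each v_i has degree d_i in the subgraph induced by {v_i, …, v_n}. Then the number of cliques of G (including the empty clique) is at most 1 + sum over i of 2^{d_i}. -/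
open Classical in
/-- If `v_1, …, v_n` is an ordering of the vertices of `G` and `d_i` is the degree of
`v_i` in the subgraph induced by `{v_i, …, v_n}`, then `G` has at most `1 + ∑ i 2^{d_i}`
cliques (including the empty clique). -/
theorem cliqueCount_le_of_ordering {V : Type*} [Fintype V] (G : SimpleGraph V)
    (n : ℕ) (e : Fin n ≃ V) :
    cliqueCount G ≤ 1 + ∑ i : Fin n,
      2 ^ (Finset.univ.filter fun j : Fin n => i < j ∧ G.Adj (e i) (e j)).card := by
  classical
  set T := (Finset.univ.filter fun s : Finset V => G.IsClique (s : Set V)) with hT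
  have hempty : (∅ : Finset V) ∈ T := by
    simp [hT, SimpleGraph.IsClique, Set.Pairwise]
  have hcard : cliqueCount G = (T.erase ∅).card + 1 := by
    rw [cliqueCount, ← hT, Finset.card_erase_add_one hempty]
  set S : Finset (Σ i : Fin n, Finset (Fin n)) := Finset.univ.sigma fun i : Fin n =>
      (Finset.univ.filter fun j : Fin n => i < j ∧ G.Adj (e i) (e j)).powerset with hS
  have hSc : S.card = ∑ i : Fin n,
      2 ^ (Finset.univ.filter fun j : Fin n => i < j ∧ G.Adj (e i) (e j)).card := by
    rw [hS, Finset.card_sigma]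
    simp [Finset.card_powerset]
  have key : (T.erase ∅).card ≤ S.card := by
    apply Finset.card_le_card_of_surjOn (fun x : Σ i : Fin n, Finset (Fin n) =>
      insert (e x.1) (x.2.image e))
    intro s hs
    simp only [Finset.coe_erase, Set.mem_diff, Finset.mem_coe, Set.mem_singleton_iff] at hs
    obtain ⟨hsT, hsne⟩ := hs
    have hclique : G.IsClique (s : Set V) := by
      rw [hT] at hsT; simpa using hsT
    have hne : (s.image e.symm).Nonempty :=
      Finset.image_nonempty.2 (Finset.nonempty_iff_ne_empty.2 hsne)
    set i := (s.image e.symm).min' hne with hi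
    have himem : i ∈ s.image e.symm := Finset.min'_mem _ hne
    obtain ⟨x, hxs, hxe⟩ := Finset.mem_image.1 himem
    have heis : e i ∈ s := by rw [← hxe, Equiv.apply_symm_apply]; exact hxs
    refine ⟨⟨i, (s.erase (e i)).image e.symm⟩, ?_, ?_⟩
    · simp only [hS, Finset.mem_coe, Finset.mem_sigma, Finset.mem_univ, true_and,
        Finset.mem_powerset]
      intro j hj
      obtain ⟨y, hy, hye⟩ := Finset.mem_image.1 hj
      have hys : y ∈ s := Finset.mem_of_mem_erase hy
      have hyne : y ≠ e i := Finset.ne_of_mem_erase hy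
      have hij : i ≤ j := by
        rw [hi]
        exact Finset.min'_le _ _ (Finset.mem_image.2 ⟨y, hys, hye⟩)
      have hjne : i ≠ j := by
        intro h
        apply hyne
        rw [← hye] at h
        rw [h, Equiv.apply_symm_apply]
      refine Finset.mem_filter.2 ⟨Finset.mem_univ _, lt_of_le_of_ne hij hjne, ?_⟩
      have : e j = y := by rw [← hye, Equiv.apply_symm_apply]
      rw [this]
      exact hclique heis hys (fun h => hyne h.symm)
    · simp only
      rw [Finset.image_image]
      have : (e ∘ e.symm) = id := by ext v; simp
      rw [this, Finset.image_id, Finset.insert_erase heis]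
  rw [hcard, hSc] at *
  omega
end
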